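/- arXiv:2205.02656 — 2 statements merged into one kernel-verified Lean document; each statement's English description precedes it below -/
import Mathlib

section
/- Let G be a graph, d an integer, and F an elimination forest of G of depth at most d. Then F is also an elimination forest of the d-improved graph G^⟨d⟩. Equivalently: if u, v are non-adjacent vertices of G with at least d+1 common neighbours, then in any elimination forest of G of depth at most d, u and v are in the ancestor-descendant relation. -/
structure RootedForest (V : Type) where
  parent : V → Option V
  vdepth : V → ℕ
  vdepth_root : ∀ v, parent v = none → vdepth v = 1
  vdepth_parent : ∀ v p, parent v = some p → vdepth v = vdepth p + 1

namespace RootedForest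

variable {V : Type}

/-- `F.Anc u v` means `u` is an ancestor of `v` (reflexively). -/
def Anc (F : RootedForest V) (u v : V) : Prop :=
  Relation.ReflTransGen (fun a b => F.parent a = some b) v u

/-- ancestors of `u`, including `u` itself. -/
def tail (F : RootedForest V) (u : V) : Set V := {w | F.Anc w u}

/-- descendants of `u`, including `u` itself. -/
def desc (F : RootedForest V) (u : V) : Set V := {w | F.Anc u w}

def comp (F : RootedForest V) (u : V) : Set V := F.tail u ∪ F.desc u

/-- ancestor closure of a set of vertices. -/
def cl (F : RootedForest V) (A : Set V) : Set V := ⋃ u ∈ A, F.tail u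

/-- children of `u`. -/
def chld (F : RootedForest V) (u : V) : Set V := {v | F.parent v = some u}

/-- the forest has depth at most `d`. -/
def DepthLE (F : RootedForest V) (d : ℕ) : Prop := ∀ v, F.vdepth v ≤ d

/-- the forest consists of a single tree. -/
def IsTree (F : RootedForest V) : Prop := ∃ r, ∀ v, F.Anc r v

end RootedForest

/-- `F` is an elimination forest of `G`: every edge joins an ancestor/descendant pair. -/
def SimpleGraph.IsElimForest {V : Type} (G : SimpleGraph V) (F : RootedForest V) : Prop :=
  ∀ u v, G.Adj u v → F.Anc u v ∨ F.Anc v u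

/-- the treedepth of a graph. -/
noncomputable def SimpleGraph.treedepth {V : Type} (G : SimpleGraph V) : ℕ :=
  sInf {d | ∃ F : RootedForest V, G.IsElimForest F ∧ F.DepthLE d}

/-- The `d`-improved graph of `G`: add an edge between every pair of non-adjacent
vertices having at least `d+1` common neighbours of degree at most `d` in `G`. -/
def improvedGraph {V : Type} [Fintype V] [DecidableEq V] (G : SimpleGraph V)
    [DecidableRel G.Adj] (d : ℕ) : SimpleGraph V :=
  SimpleGraph.fromRel (fun u v => G.Adj u v ∨
    d + 1 ≤ (Finset.univ.filter (fun w => G.Adj u w ∧ G.Adj v w ∧ G.degree w ≤ d)).card)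

namespace RootedForest

lemma anc_trans {V : Type} (F : RootedForest V) {a b c : V}
    (h1 : F.Anc a b) (h2 : F.Anc b c) : F.Anc a c :=
  Relation.ReflTransGen.trans h2 h1

lemma anc_comparable {V : Type} (F : RootedForest V) {a b w : V}
    (ha : F.Anc a w) (hb : F.Anc b w) : F.Anc a b ∨ F.Anc b a := by
  unfold Anc at *
  induction ha using Relation.ReflTransGen.head_induction_on generalizing b with
  | refl => exact Or.inr hb
  | head hstep htail ih =>
    rcases hb.cases_head with h | ⟨q, hq, hqb⟩
    · subst h
      exact Or.inl (Relation.ReflTransGen.head hstep htail)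
    · rw [hstep] at hq
      cases Option.some_injective _ hq
      exact ih hqb

lemma ncard_tail_le {V : Type} [Fintype V] (F : RootedForest V) :
    ∀ (n : ℕ) (u : V), F.vdepth u = n → (F.tail u).ncard ≤ n := by
  intro n
  induction n with
  | zero =>
    intro u hu
    exfalso
    cases h : F.parent u with
    | none => have := F.vdepth_root u h; omega
    | some p => have := F.vdepth_parent u p h; omega
  | succ n ih =>
    intro u hu
    cases h : F.parent u with
    | none =>
      have htail : F.tail u = {u} := by
        ext w
        simp only [tail, Set.mem_setOf_eq, Set.mem_singleton_iff]
        constructor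
        · intro hw
          rcases hw.cases_head with h' | ⟨q, hq, _⟩
          · exact h'.symm
          · rw [h] at hq; exact absurd hq (by simp)
        · rintro rfl; exact Relation.ReflTransGen.refl
      rw [htail, Set.ncard_singleton]; omega
    | some p =>
      have hp : F.vdepth p = n := by
        have := F.vdepth_parent u p h; omega
      have hsub : F.tail u ⊆ insert u (F.tail p) := by
        intro w hw
        rcases hw.cases_head with h' | ⟨q, hq, hqw⟩
        · exact Or.inl h'.symm
        · rw [h] at hq
          cases Option.some_injective _ hq
          exact Or.inr hqw
      calc (F.tail u).ncard ≤ (insert u (F.tail p)).ncard :=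
            Set.ncard_le_ncard hsub (Set.toFinite _)
        _ ≤ (F.tail p).ncard + 1 := Set.ncard_insert_le _ _
        _ ≤ n + 1 := by have := ih p hp; omega

end RootedForest

lemma key_improved {V : Type} [Fintype V] [DecidableEq V]
    (G : SimpleGraph V) [DecidableRel G.Adj] (d : ℕ) (F : RootedForest V)
    (hF : G.IsElimForest F) (hd : F.DepthLE d) {u v : V}
    (hcard : d + 1 ≤ (Finset.univ.filter
      (fun w => G.Adj u w ∧ G.Adj v w ∧ G.degree w ≤ d)).card) :
    F.Anc u v ∨ F.Anc v u := by
  by_contra hcon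
  push_neg at hcon
  obtain ⟨huv, hvu⟩ := hcon
  set s := Finset.univ.filter (fun w => G.Adj u w ∧ G.Adj v w ∧ G.degree w ≤ d) with hs
  have hsub : (↑s : Set V) ⊆ F.tail u := by
    intro w hw
    simp only [hs, Finset.coe_filter, Set.mem_setOf_eq, Finset.mem_univ, true_and] at hw
    obtain ⟨hwu, hwv, -⟩ := hw
    have h1 : F.Anc w u := by
      rcases hF u w hwu with h | h
      · rcases hF v w hwv with h' | h'
        · exact absurd (F.anc_comparable h h') (by tauto)
        · exact absurd (F.anc_trans h h') huv
      · exact h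
    exact h1
  have hle : s.card ≤ d := by
    calc s.card = (↑s : Set V).ncard := (Set.ncard_coe_finset s).symm
      _ ≤ (F.tail u).ncard := Set.ncard_le_ncard hsub (Set.toFinite _)
      _ ≤ F.vdepth u := F.ncard_tail_le (F.vdepth u) u rfl
      _ ≤ d := hd u
  omega

theorem elimForest_of_improved {V : Type} [Fintype V] [DecidableEq V]
    (G : SimpleGraph V) [DecidableRel G.Adj] (d : ℕ) (F : RootedForest V)
    (hF : G.IsElimForest F) (hd : F.DepthLE d) :
    (improvedGraph G d).IsElimForest F := by
  intro u v hadj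
  rw [improvedGraph, SimpleGraph.fromRel_adj] at hadj
  obtain ⟨hne, h⟩ := hadj
  rcases h with (h | h) | (h | h)
  · exact hF u v h
  · exact key_improved G d F hF hd h
  · exact (hF v u h).symm
  · exact (key_improved G d F hF hd h).symm
end

section
/- If the d-improved graph G^⟨d⟩ of G contains a clique of size at least d+1, then td(G) > d. -/
/-!
Depths strictly decrease towards the root, so a set of pairwise comparable vertices of a
forest of depth at most `d` has at most `d` elements. If `u` and `v` are incomparable in an
elimination forest of `G`, every common neighbour of `u` and `v` must be a strict ancestor of
both, and there are fewer than `d` of those. Hence an elimination forest of `G` of depth at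
most `d` is one of `G^⟨d⟩` as well, and it cannot accommodate a clique of size `d + 1`.
-/

namespace RootedForest

variable {V : Type} (F : RootedForest V)

lemma one_le_vdepth (v : V) : 1 ≤ F.vdepth v := by
  cases h : F.parent v with
  | none => rw [F.vdepth_root v h]
  | some p => rw [F.vdepth_parent v p h]; omega

lemma vdepth_lt_of_transGen {u v : V}
    (h : Relation.TransGen (fun a b => F.parent a = some b) v u) :
    F.vdepth u < F.vdepth v := by
  induction h with
  | single h => have := F.vdepth_parent _ _ h; omega
  | tail _ h ih => have := F.vdepth_parent _ _ h; omega

lemma vdepth_lt_of_anc {u v : V} (h : F.Anc u v) (hne : u ≠ v) : F.vdepth u < F.vdepth v :=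
  F.vdepth_lt_of_transGen ((Relation.reflTransGen_iff_eq_or_transGen.mp h).resolve_left hne)

lemma anc_or_anc_of_anc {u a b : V} (ha : F.Anc a u) (hb : F.Anc b u) :
    F.Anc a b ∨ F.Anc b a :=
  (Relation.ReflTransGen.total_of_right_unique
    (fun _ _ _ hb hc => Option.some.inj (hb.symm.trans hc)) ha hb).symm

lemma card_le_of_pairwise_anc {S : Finset V} {n : ℕ}
    (hS : (S : Set V).Pairwise fun a b => F.Anc a b ∨ F.Anc b a)
    (hn : ∀ v ∈ S, F.vdepth v ≤ n) : S.card ≤ n := by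
  have hinj : Set.InjOn F.vdepth S := by
    intro a ha b hb hab
    by_contra hne
    rcases hS ha hb hne with h | h
    · exact (F.vdepth_lt_of_anc h hne).ne hab
    · exact (F.vdepth_lt_of_anc h (Ne.symm hne)).ne hab.symm
  calc S.card ≤ (Finset.Icc 1 n).card :=
        Finset.card_le_card_of_injOn F.vdepth
          (fun v hv => Finset.mem_Icc.mpr ⟨F.one_le_vdepth v, hn v hv⟩) hinj
    _ = n := by simp

lemma card_lt_vdepth_of_forall_anc {u : V} {S : Finset V}
    (hS : ∀ w ∈ S, F.Anc w u ∧ w ≠ u) : S.card < F.vdepth u := by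
  have hcard : S.card ≤ F.vdepth u - 1 :=
    F.card_le_of_pairwise_anc (fun a ha b hb _ => F.anc_or_anc_of_anc (hS a ha).1 (hS b hb).1)
      fun w hw => by have := F.vdepth_lt_of_anc (hS w hw).1 (hS w hw).2; omega
  have := F.one_le_vdepth u
  omega

def path {n : ℕ} (e : V ≃ Fin n) : RootedForest V where
  parent v := if (e v : ℕ) = 0 then none
    else some (e.symm ⟨e v - 1, lt_of_le_of_lt (Nat.sub_le _ _) (e v).isLt⟩)
  vdepth v := e v + 1
  vdepth_root v h := by
    by_cases hv : (e v : ℕ) = 0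
    · omega
    · simp [hv] at h
  vdepth_parent v p h := by
    by_cases hv : (e v : ℕ) = 0
    · simp [hv] at h
    · simp only [hv, if_false, Option.some.injEq] at h
      subst h
      simp only [Equiv.apply_symm_apply]
      omega

variable {n : ℕ} (e : V ≃ Fin n)

lemma path_anc {u v : V} (h : e u ≤ e v) : (path e).Anc u v := by
  obtain ⟨k, hk⟩ := Nat.exists_eq_add_of_le (Fin.le_def.mp h)
  induction k generalizing v with
  | zero =>
    rw [e.injective (Fin.ext hk)]
    exact Relation.ReflTransGen.refl
  | succ k ih =>
    have hlt : (e u : ℕ) + k < n := by have := (e v).isLt; omega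
    have hparent : (path e).parent v = some (e.symm ⟨e u + k, hlt⟩) := by
      simp only [path, hk, Nat.add_eq_zero_iff, one_ne_zero, and_false, if_false]
      rfl
    exact Relation.ReflTransGen.head hparent
      (ih (by simp [Fin.le_def]) (by simp))

lemma depthLE_path : (path e).DepthLE n := fun v => (e v).isLt

end RootedForest

namespace SimpleGraph

variable {V : Type} {G : SimpleGraph V} {F : RootedForest V} {d : ℕ}

lemma isElimForest_path {n : ℕ} (G : SimpleGraph V) (e : V ≃ Fin n) :
    G.IsElimForest (RootedForest.path e) := fun u v _ =>
  (le_total (e u) (e v)).imp (RootedForest.path_anc e) (RootedForest.path_anc e)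

lemma exists_isElimForest_depthLE_treedepth [Finite V] (G : SimpleGraph V) :
    ∃ F, G.IsElimForest F ∧ F.DepthLE G.treedepth := by
  obtain ⟨n, ⟨e⟩⟩ := Finite.exists_equiv_fin V
  exact Nat.sInf_mem (s := {d | ∃ F, G.IsElimForest F ∧ F.DepthLE d})
    ⟨n, RootedForest.path e, G.isElimForest_path e, RootedForest.depthLE_path e⟩

lemma IsElimForest.anc_or_anc_of_le_card (hF : G.IsElimForest F) (hd : F.DepthLE d)
    {u v : V} {W : Finset V} (hW : ∀ w ∈ W, G.Adj u w ∧ G.Adj v w) (hcard : d ≤ W.card) :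
    F.Anc u v ∨ F.Anc v u := by
  by_contra huv
  have hanc : ∀ w ∈ W, F.Anc w u ∧ w ≠ u := by
    intro w hw
    obtain ⟨hu, hv⟩ := hW w hw
    refine ⟨?_, (G.ne_of_adj hu).symm⟩
    rcases hF u w hu with huw | hwu
    · rcases hF v w hv with hvw | hwv
      · exact absurd (F.anc_or_anc_of_anc huw hvw) huv
      · exact absurd (Or.inl (hwv.trans huw)) huv
    · exact hwu
  have := F.card_lt_vdepth_of_forall_anc hanc
  have := hd u
  omega

lemma IsElimForest.improvedGraph_of_depthLE [Fintype V] [DecidableEq V] [DecidableRel G.Adj]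
    (hF : G.IsElimForest F) (hd : F.DepthLE d) : (improvedGraph G d).IsElimForest F := by
  have hcomparable : ∀ a b, G.Adj a b ∨ d + 1 ≤ (Finset.univ.filter
      fun w => G.Adj a w ∧ G.Adj b w ∧ G.degree w ≤ d).card → F.Anc a b ∨ F.Anc b a := by
    rintro a b (hab | hcard)
    · exact hF a b hab
    · refine hF.anc_or_anc_of_le_card hd (W := Finset.univ.filter
        fun w => G.Adj a w ∧ G.Adj b w ∧ G.degree w ≤ d) (fun w hw => ?_) (by omega)
      simp only [Finset.mem_filter, Finset.mem_univ, true_and] at hw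
      exact ⟨hw.1, hw.2.1⟩
  intro u v huv
  rcases (fromRel_adj _ _ _).mp huv |>.2 with h | h
  · exact hcomparable u v h
  · exact (hcomparable v u h).symm

lemma IsElimForest.card_le_of_isClique (hF : G.IsElimForest F) (hd : F.DepthLE d)
    {s : Finset V} (hs : G.IsClique (s : Set V)) : s.card ≤ d :=
  F.card_le_of_pairwise_anc (hs.imp fun u v => hF u v) fun v _ => hd v

end SimpleGraph

theorem treedepth_gt_of_improved_clique {V : Type} [Fintype V] [DecidableEq V]
    (G : SimpleGraph V) [DecidableRel G.Adj] (d : ℕ)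
    (h : ∃ s : Finset V, (improvedGraph G d).IsClique (s : Set V) ∧ d + 1 ≤ s.card) :
    d < G.treedepth := by
  obtain ⟨s, hs, hcard⟩ := h
  obtain ⟨F, hF, hdepth⟩ := G.exists_isElimForest_depthLE_treedepth
  by_contra! hle
  have hd : F.DepthLE d := fun v => (hdepth v).trans hle
  have := (hF.improvedGraph_of_depthLE hd).card_le_of_isClique hd hs
  omega
end
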